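/- Suppose A ⊆ T is such that the inclusion A ⊆ T induces an isomorphism of the (A ∩ 𝔪)-adic completion of A with T, A is a domain, pA is a prime ideal of A, Qᵢ ∩ A = pA for every i, and every prime ideal Q of T with Q ∩ A = pA satisfies Q ⊆ Qᵢ for some i. Then for every associated prime P of the T-module T/pT, P ∩ A = pA; in particular, every such P lies in the formal fiber of pA, i.e., P ⊆ Qᵢ for some i ∈ {1, …, k}. -/

import Mathlib

/-!
Since `T` is the completion of the Noetherian ring `A`, it is flat over `A`. Flat base change
keeps every `a ∈ A \ pA`, which is regular on the domain `A/pA`, regular on `T/pT`; an element of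
an associated prime of `T/pT` is a zero divisor there, so `P ∩ A ⊆ pA`. Conversely `p ∈ P`,
since `P` contains the annihilator `pT` of `T/pT`. Thus `P` lies over `pA`, and the description of
the formal fiber of `pA` puts `P` inside some `Qᵢ`.
-/

universe u

/-- `Γ(X) = max(|X|, ℵ₀)`. -/
noncomputable def Gamma (X : Type u) : Cardinal.{u} :=
  max (Cardinal.mk X) Cardinal.aleph0

/-- The set `(Q \ pT)R = {t ∈ T | t = qr for some q ∈ Q \ pT, r ∈ R}`. -/
def CompAvoid {T : Type u} [CommRing T] (Q : Ideal T) (p : T) (R : Set T) : Set T :=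
  {t : T | ∃ q ∈ Q, q ∉ Ideal.span {p} ∧ ∃ r ∈ R, t = q * r}

/-- `R` is quasilocal with maximal ideal `R ∩ 𝔪`: every element of `R` outside the
maximal ideal of `T` is a unit of `R`. -/
def QuasilocalWithMaxIdeal {T : Type u} [CommRing T] [IsLocalRing T] (R : Subring T) : Prop :=
  ∀ x : R, (x : T) ∉ IsLocalRing.maximalIdeal T → IsUnit x

/-- `R` is a `p`ca (`pT`-complement avoiding) subring of `T`:
`(R, R ∩ 𝔪)` is quasilocal, `p ∈ R`, `Γ(R) < |T|`, `R ∩ P = (0)` for every associated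
prime `P` of `T`, and `((Qᵢ \ pT)R) ∩ R = {0}` for all `i`. -/
def IsPcaSubring {T : Type u} [CommRing T] [IsLocalRing T] {k : ℕ}
    (Q : Fin k → Ideal T) (p : T) (R : Subring T) : Prop :=
  p ∈ R ∧ QuasilocalWithMaxIdeal R ∧
  Gamma ↥R < Cardinal.mk T ∧
  (∀ P ∈ associatedPrimes T T, ∀ x ∈ R, x ∈ P → x = 0) ∧
  (∀ i : Fin k, ∀ t ∈ CompAvoid (Q i) p (R : Set T), t ∈ R → t = 0)

theorem IsAssociatedPrime.not_isSMulRegular {R M : Type*} [CommSemiring R] [AddCommMonoid M]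
    [Module R M] {I : Ideal R} (h : IsAssociatedPrime I M) {r : R} (hr : r ∈ I) :
    ¬IsSMulRegular M r := by
  obtain ⟨hI, x, rfl⟩ := h
  intro hreg
  obtain ⟨n, hn⟩ := Ideal.mem_radical_iff.mp hr
  rw [Submodule.mem_colon_singleton, Submodule.mem_bot] at hn
  have hx : x = 0 := hreg.pow n (show r ^ n • x = r ^ n • 0 by rw [hn, smul_zero])
  subst hx
  exact hI.ne_top (by simp)

theorem IsAssociatedPrime.le_of_quotient {R : Type*} [CommRing R] {I J : Ideal R}
    (h : IsAssociatedPrime I (R ⧸ J)) : J ≤ I := by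
  simpa [Submodule.annihilator_top, Ideal.annihilator_quotient] using h.annihilator_le

theorem isSMulRegular_quotient_map_of_flat {R S : Type*} [CommRing R] [CommRing S] [Algebra R S]
    [Module.Flat R S] {I : Ideal R} {r : R} (hr : IsSMulRegular (R ⧸ I) r) :
    IsSMulRegular (S ⧸ I.map (algebraMap R S)) r :=
  ((Algebra.TensorProduct.quotIdealMapEquivTensorQuot S I).toLinearEquiv.restrictScalars R
    |>.isSMulRegular_congr r).mpr (hr.lTensor S)

theorem comap_eq_of_mem_associatedPrimes_quotient_map_of_flat {R S : Type*} [CommRing R]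
    [CommRing S] [Algebra R S] [Module.Flat R S] {p : Ideal R} [p.IsPrime] {P : Ideal S}
    (hP : P ∈ associatedPrimes S (S ⧸ p.map (algebraMap R S))) :
    P.comap (algebraMap R S) = p := by
  refine le_antisymm (fun r hr => ?_) (Ideal.map_le_iff_le_comap.mp hP.le_of_quotient)
  by_contra hrp
  have hreg : IsSMulRegular (R ⧸ p) r := by
    rw [← isSMulRegular_algebraMap_iff (R ⧸ p)]
    exact (IsRegular.of_ne_zero (by simpa [Ideal.Quotient.eq_zero_iff_mem] using hrp)).left
  exact hP.not_isSMulRegular hr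
    ((isSMulRegular_algebraMap_iff S).mpr (isSMulRegular_quotient_map_of_flat hreg))

theorem Module.Flat.of_ringEquiv_adicCompletion {R S : Type*} [CommRing R] [IsNoetherianRing R]
    [CommRing S] [Algebra R S] (I : Ideal R) (φ : AdicCompletion I R ≃+* S)
    (hφ : ∀ r, φ (algebraMap R _ r) = algebraMap R S r) : Module.Flat R S :=
  .of_linearEquiv (AlgEquiv.ofRingEquiv (f := φ) hφ).symm.toLinearEquiv

theorem statement12_general
    {T : Type u} [CommRing T] [IsLocalRing T]
    {k : ℕ} (Q : Fin k → Ideal T)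
    (p : T)
    (A : Subring T) (hpA : p ∈ A)
    (hANoeth : IsNoetherianRing ↥A)
    (φ : AdicCompletion ((IsLocalRing.maximalIdeal T).comap A.subtype) ↥A ≃+* T)
    (hφ : ∀ a : ↥A,
      φ (algebraMap ↥A (AdicCompletion ((IsLocalRing.maximalIdeal T).comap A.subtype) ↥A) a)
        = (a : T))
    (hpAprime : (Ideal.span {(⟨p, hpA⟩ : ↥A)}).IsPrime)
    (hfiber : ∀ Q' : Ideal T, Q'.IsPrime →
      Q'.comap A.subtype = Ideal.span {(⟨p, hpA⟩ : ↥A)} → ∃ i, Q' ≤ Q i)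
    :
    (∀ P ∈ associatedPrimes T (T ⧸ Ideal.span {p}),
      P.comap A.subtype = Ideal.span {(⟨p, hpA⟩ : ↥A)} ∧ ∃ i, P ≤ Q i) := by
  intro P hP
  have : Module.Flat A T := Module.Flat.of_ringEquiv_adicCompletion _ φ hφ
  have hpT : Ideal.span {p} = (Ideal.span {(⟨p, hpA⟩ : A)}).map (algebraMap A T) := by
    rw [Ideal.map_span, Set.image_singleton]
    rfl
  rw [hpT] at hP
  have hcomap := comap_eq_of_mem_associatedPrimes_quotient_map_of_flat hP
  exact ⟨hcomap, hfiber P hP.isPrime hcomap⟩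

/-- **Necessity, associated primes of `T/pT`.** If `Â = T`, `A` is a domain, `pA` is
prime with semilocal formal fiber having maximal ideals the elements of `C`, then every
associated prime `P` of `T/pT` satisfies `P ∩ A = pA`; in particular `P` lies in the
formal fiber of `pA`, i.e. `P ⊆ Qᵢ` for some `i`. -/
theorem statement12
    {T : Type u} [CommRing T] [IsLocalRing T] [IsNoetherianRing T]
    [IsAdicComplete (IsLocalRing.maximalIdeal T) T]
    {k : ℕ} (hk : 0 < k) (Q : Fin k → Ideal T)
    (hQprime : ∀ i, (Q i).IsPrime)
    (hQnonmax : ∀ i, Q i ≠ IsLocalRing.maximalIdeal T)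
    (hQinc : ∀ i j, Q i ≤ Q j → Q i = Q j)
    (p : T) (hp0 : p ≠ 0) (hpQ : ∀ i, p ∈ Q i)
    (A : Subring T) (hpA : p ∈ A)
    (hANoeth : IsNoetherianRing ↥A) (hAdom : IsDomain ↥A)
    (hAql : QuasilocalWithMaxIdeal A)
    (φ : AdicCompletion ((IsLocalRing.maximalIdeal T).comap A.subtype) ↥A ≃+* T)
    (hφ : ∀ a : ↥A,
      φ (algebraMap ↥A (AdicCompletion ((IsLocalRing.maximalIdeal T).comap A.subtype) ↥A) a)
        = (a : T))
    (hpAprime : (Ideal.span {(⟨p, hpA⟩ : ↥A)}).IsPrime)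
    (hQA : ∀ i, (Q i).comap A.subtype = Ideal.span {(⟨p, hpA⟩ : ↥A)})
    (hfiber : ∀ Q' : Ideal T, Q'.IsPrime →
      Q'.comap A.subtype = Ideal.span {(⟨p, hpA⟩ : ↥A)} → ∃ i, Q' ≤ Q i)
    :
    (∀ P ∈ associatedPrimes T (T ⧸ Ideal.span {p}),
      P.comap A.subtype = Ideal.span {(⟨p, hpA⟩ : ↥A)} ∧ ∃ i, P ≤ Q i) :=
  statement12_general Q p A hpA hANoeth φ hφ hpAprime hfiber
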